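/- arXiv:1503.06459 — 2 statements merged into one kernel-verified Lean document; each statement's English description precedes it below -/
import Mathlib

section
/- Strict sub-solution comparison: under the assumptions above, if additionally H(∇φ(x),x) ≤ -δ|x-ξ|² on U for some δ > 0 and ξ ∈ U, then for any C¹ curve η: [0,t] → U with η(0) = x, η(t) = ξ, one has φ(x) - φ(ξ) ≤ ∫_0^t L(-η̇(s),η(s)) ds - δ∫_0^t |η(s) - ξ|² ds. -/
open scoped Matrix
open Set MeasureTheory

/-!
Along the curve, `d/ds φ(η s) = ∇φ(η s) ⬝ᵥ η̇ s`. Completing the square in the positive definite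
form `a` gives the Fenchel–Young inequality `p ⬝ᵥ v ≤ H(p, x) + L(v, x)`; for `p = ∇φ(η s)` and
`v = -η̇ s` the strict sub-solution bound turns it into
`-d/ds φ(η s) ≤ L(-η̇ s, η s) - δ |η s - ξ|²`, which integrates over `[0, t]` to the claim.
-/

theorem ContinuousOn.matrix_inv {n X : Type*} [Fintype n] [DecidableEq n] [TopologicalSpace X]
    {A : X → Matrix n n ℝ} {s : Set X} (hA : ContinuousOn A s) (hdet : ∀ x ∈ s, (A x).det ≠ 0) :
    ContinuousOn (fun x => (A x)⁻¹) s := fun x hx =>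
  (continuousAt_matrix_inv _ (Ring.inverse_eq_inv' (G₀ := ℝ) ▸ continuousAt_inv₀ (hdet x hx))
    ).comp_continuousWithinAt (hA x hx)

namespace Matrix

variable {n : Type*} [Fintype n] [DecidableEq n]

-- The paper's `H(p, x)` and `L(v, x)` are `hamiltonian (a x) (b x) p` and
-- `lagrangian (a x) (b x) v`.
noncomputable def hamiltonian (A : Matrix n n ℝ) (c p : n → ℝ) : ℝ := (A *ᵥ p) ⬝ᵥ p - c ⬝ᵥ p

noncomputable def lagrangian (A : Matrix n n ℝ) (c v : n → ℝ) : ℝ :=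
  1 / 4 * ((A⁻¹ *ᵥ (v + c)) ⬝ᵥ (v + c))

-- Complete the square: `0 ≤ q ⬝ᵥ A q` for `q = p - ½ A⁻¹ w`.
theorem PosDef.dotProduct_le_mulVec_dotProduct_add_inv {A : Matrix n n ℝ} (hA : A.PosDef)
    (p w : n → ℝ) : p ⬝ᵥ w ≤ (A *ᵥ p) ⬝ᵥ p + 1 / 4 * ((A⁻¹ *ᵥ w) ⬝ᵥ w) := by
  set u := A⁻¹ *ᵥ w
  have hAu : A *ᵥ u = w := by
    rw [mulVec_mulVec, mul_nonsing_inv _ hA.det_pos.ne'.isUnit, one_mulVec]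
  have hsymm : u ⬝ᵥ (A *ᵥ p) = p ⬝ᵥ w := by
    rw [dotProduct_mulVec, ← mulVec_transpose, ← conjTranspose_eq_transpose_of_trivial,
      hA.isHermitian.eq, hAu, dotProduct_comm]
  have hsq : 0 ≤ (p - (1 / 2 : ℝ) • u) ⬝ᵥ (A *ᵥ (p - (1 / 2 : ℝ) • u)) := by
    simpa using hA.posSemidef.dotProduct_mulVec_nonneg (p - (1 / 2 : ℝ) • u)
  rw [mulVec_sub, mulVec_smul, hAu, sub_dotProduct, dotProduct_sub, dotProduct_sub,
    smul_dotProduct, smul_dotProduct, dotProduct_smul, dotProduct_smul, hsymm,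
    dotProduct_comm p (A *ᵥ p)] at hsq
  simp only [smul_eq_mul] at hsq
  linarith

theorem PosDef.dotProduct_le_hamiltonian_add_lagrangian {A : Matrix n n ℝ} (hA : A.PosDef)
    (c p v : n → ℝ) : p ⬝ᵥ v ≤ hamiltonian A c p + lagrangian A c v := by
  have := hA.dotProduct_le_mulVec_dotProduct_add_inv p (v + c)
  rw [dotProduct_add, dotProduct_comm p c] at this
  unfold hamiltonian lagrangian
  linarith

theorem continuousOn_lagrangian {X : Type*} [TopologicalSpace X] {A : X → Matrix n n ℝ}
    {c v : X → n → ℝ} {s : Set X} (hA : ContinuousOn A s) (hdet : ∀ x ∈ s, (A x).det ≠ 0)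
    (hc : ContinuousOn c s) (hv : ContinuousOn v s) :
    ContinuousOn (fun x => lagrangian (A x) (c x) (v x)) s := by
  have hL : Continuous fun q : Matrix n n ℝ × (n → ℝ) => 1 / 4 * ((q.1 *ᵥ q.2) ⬝ᵥ q.2) :=
    continuous_const.mul ((continuous_fst.matrix_mulVec continuous_snd).dotProduct continuous_snd)
  exact hL.comp_continuousOn (f := fun x => ((A x)⁻¹, v x + c x))
    ((hA.matrix_inv hdet).prodMk (hv.add hc))

end Matrix

theorem ContinuousLinearMap.apply_eq_dotProduct {n : Type*} [Fintype n] [DecidableEq n]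
    (ℓ : (n → ℝ) →L[ℝ] ℝ) (v : n → ℝ) : ℓ v = (fun i => ℓ (Pi.single i 1)) ⬝ᵥ v := by
  rw [← ℓ.coe_coe, LinearMap.pi_apply_eq_sum_univ, dotProduct]
  refine Finset.sum_congr rfl fun i _ => ?_
  rw [smul_eq_mul, mul_comm]
  congr 2
  ext j
  simp [Pi.single_apply, eq_comm]

section Curve

variable {E F : Type*} [NormedAddCommGroup E] [NormedSpace ℝ E] [NormedAddCommGroup F]
  [NormedSpace ℝ F] {U : Set E} {φ : E → F} {η : ℝ → E}

theorem ContDiffOn.hasDerivAt_comp (hU : IsOpen U) (hφ : ContDiffOn ℝ 1 φ U)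
    (hη : ContDiff ℝ 1 η) {s : ℝ} (hs : η s ∈ U) :
    HasDerivAt (fun r => φ (η r)) (fderiv ℝ φ (η s) (deriv η s)) s :=
  ((hφ.differentiableOn one_ne_zero).differentiableAt (hU.mem_nhds hs)).hasFDerivAt.comp_hasDerivAt
    s ((hη.differentiable one_ne_zero) s).hasDerivAt

theorem ContDiffOn.continuousOn_fderiv_apply_deriv (hU : IsOpen U) (hφ : ContDiffOn ℝ 1 φ U)
    (hη : ContDiff ℝ 1 η) {S : Set ℝ} (hηU : MapsTo η S U) :
    ContinuousOn (fun s => fderiv ℝ φ (η s) (deriv η s)) S :=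
  ((hφ.continuousOn_fderiv_of_isOpen hU le_rfl).comp hη.continuous.continuousOn hηU).clm_apply
    (hη.continuous_deriv le_rfl).continuousOn

theorem integral_fderiv_apply_deriv_eq_sub [CompleteSpace F] (hU : IsOpen U)
    (hφ : ContDiffOn ℝ 1 φ U) (hη : ContDiff ℝ 1 η) {a b : ℝ} (hηU : MapsTo η (uIcc a b) U) :
    ∫ s in a..b, fderiv ℝ φ (η s) (deriv η s) = φ (η b) - φ (η a) :=
  intervalIntegral.integral_eq_sub_of_hasDerivAt (fun _ hs => hφ.hasDerivAt_comp hU hη (hηU hs))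
    (hφ.continuousOn_fderiv_apply_deriv hU hη hηU).intervalIntegrable

end Curve

theorem sub_le_integral_of_neg_fderiv_le {E : Type*} [NormedAddCommGroup E] [NormedSpace ℝ E]
    {U : Set E} (hU : IsOpen U) {φ : E → ℝ} (hφ : ContDiffOn ℝ 1 φ U) {η : ℝ → E}
    (hη : ContDiff ℝ 1 η) {t : ℝ} (ht : 0 ≤ t) (hηU : MapsTo η (Icc 0 t) U) {g : ℝ → ℝ}
    (hg : IntervalIntegrable g volume 0 t)
    (hle : ∀ s ∈ Icc 0 t, -fderiv ℝ φ (η s) (deriv η s) ≤ g s) :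
    φ (η 0) - φ (η t) ≤ ∫ s in 0..t, g s := by
  rw [← uIcc_of_le ht] at hηU
  calc φ (η 0) - φ (η t) = ∫ s in 0..t, -fderiv ℝ φ (η s) (deriv η s) := by
        rw [intervalIntegral.integral_neg, integral_fderiv_apply_deriv_eq_sub hU hφ hη hηU,
          neg_sub]
    _ ≤ ∫ s in 0..t, g s :=
        intervalIntegral.integral_mono_on ht
          (hφ.continuousOn_fderiv_apply_deriv hU hη hηU).intervalIntegrable.neg hg hle

theorem strict_subsolution_comparison_general
    (N : ℕ) (U : Set (Fin N → ℝ)) (hU : IsOpen U)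
    (a : (Fin N → ℝ) → Matrix (Fin N) (Fin N) ℝ) (b : (Fin N → ℝ) → (Fin N → ℝ))
    (ha : ∀ i j, ContinuousOn (fun x => a x i j) U)
    (hapd : ∀ x ∈ U, (a x).PosDef)
    (hb : ∀ i, ContinuousOn (fun x => b x i) U)
    (φ : (Fin N → ℝ) → ℝ) (hφ : ContDiffOn ℝ 1 φ U)
    (δ : ℝ) (ξ : Fin N → ℝ)
    (hsub : ∀ x ∈ U,
      (a x *ᵥ (fun i => fderiv ℝ φ x (Pi.single i 1)))
          ⬝ᵥ (fun i => fderiv ℝ φ x (Pi.single i 1))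
        - b x ⬝ᵥ (fun i => fderiv ℝ φ x (Pi.single i 1))
        ≤ -δ * ((x - ξ) ⬝ᵥ (x - ξ)))
    (t : ℝ) (ht : 0 ≤ t) (η : ℝ → (Fin N → ℝ)) (hη : ContDiff ℝ 1 η)
    (hηU : ∀ s ∈ Set.Icc (0 : ℝ) t, η s ∈ U)
    (x : Fin N → ℝ) (hx : η 0 = x) (hend : η t = ξ) :
    φ x - φ ξ ≤ (∫ s in (0 : ℝ)..t,
        (1 / 4) * (((a (η s))⁻¹ *ᵥ (-(deriv η s) + b (η s))) ⬝ᵥ (-(deriv η s) + b (η s))))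
      - δ * ∫ s in (0 : ℝ)..t, (η s - ξ) ⬝ᵥ (η s - ξ) := by
  set L := fun s => Matrix.lagrangian (a (η s)) (b (η s)) (-deriv η s)
  set G := fun s => (η s - ξ) ⬝ᵥ (η s - ξ)
  have hηc : ContinuousOn η (Icc 0 t) := hη.continuous.continuousOn
  have hL : IntervalIntegrable L volume 0 t :=
    ContinuousOn.intervalIntegrable_of_Icc ht <| Matrix.continuousOn_lagrangian
      ((continuousOn_pi.2 fun i => continuousOn_pi.2 (ha i)).comp hηc hηU)
      (fun s hs => (hapd _ (hηU s hs)).det_pos.ne') ((continuousOn_pi.2 hb).comp hηc hηU)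
      (hη.continuous_deriv le_rfl).neg.continuousOn
  have hG : IntervalIntegrable G volume 0 t :=
    ((hη.continuous.sub continuous_const).dotProduct
      (hη.continuous.sub continuous_const)).intervalIntegrable 0 t
  have hpointwise : ∀ s ∈ Icc 0 t, -fderiv ℝ φ (η s) (deriv η s) ≤ L s - δ * G s := by
    intro s hs
    rw [← map_neg, ContinuousLinearMap.apply_eq_dotProduct]
    have hH : Matrix.hamiltonian (a (η s)) (b (η s)) (fun i => fderiv ℝ φ (η s) (Pi.single i 1))
        ≤ -δ * G s := hsub _ (hηU s hs)
    linarith [(hapd _ (hηU s hs)).dotProduct_le_hamiltonian_add_lagrangian (b (η s))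
      (fun i => fderiv ℝ φ (η s) (Pi.single i 1)) (-deriv η s)]
  have hcompare :=
    sub_le_integral_of_neg_fderiv_le hU hφ hη ht hηU (hL.sub (hG.const_mul δ)) hpointwise
  rwa [hx, hend, intervalIntegral.integral_sub hL (hG.const_mul δ),
    intervalIntegral.integral_const_mul] at hcompare

/-- Strict sub-solution comparison: if `φ ∈ C¹` satisfies `H(∇φ(x),x) ≤ -δ|x-ξ|²` on an open
set `U` (with `H(p,x) = a(x)p·p - b(x)·p`, `a(x)` symmetric positive definite, `δ > 0`,
`ξ ∈ U`), then for any `C¹` curve `η : [0,t] → U` with `η(0) = x`, `η(t) = ξ`,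
`φ(x) - φ(ξ) ≤ ∫_0^t L(-η̇(s), η(s)) ds - δ∫_0^t |η(s)-ξ|² ds`. -/
theorem strict_subsolution_comparison
    (N : ℕ) (U : Set (Fin N → ℝ)) (hU : IsOpen U)
    (a : (Fin N → ℝ) → Matrix (Fin N) (Fin N) ℝ) (b : (Fin N → ℝ) → (Fin N → ℝ))
    (ha : ∀ i j, ContinuousOn (fun x => a x i j) U)
    (hasym : ∀ x ∈ U, (a x).IsSymm) (hapd : ∀ x ∈ U, (a x).PosDef)
    (hb : ∀ i, ContinuousOn (fun x => b x i) U)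
    (φ : (Fin N → ℝ) → ℝ) (hφ : ContDiffOn ℝ 1 φ U)
    (δ : ℝ) (hδ : 0 < δ) (ξ : Fin N → ℝ) (hξ : ξ ∈ U)
    (hsub : ∀ x ∈ U,
      (a x *ᵥ (fun i => fderiv ℝ φ x (Pi.single i 1)))
          ⬝ᵥ (fun i => fderiv ℝ φ x (Pi.single i 1))
        - b x ⬝ᵥ (fun i => fderiv ℝ φ x (Pi.single i 1))
        ≤ -δ * ((x - ξ) ⬝ᵥ (x - ξ)))
    (t : ℝ) (ht : 0 ≤ t) (η : ℝ → (Fin N → ℝ)) (hη : ContDiff ℝ 1 η)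
    (hηU : ∀ s ∈ Set.Icc (0 : ℝ) t, η s ∈ U)
    (x : Fin N → ℝ) (hx : η 0 = x) (hend : η t = ξ) :
    φ x - φ ξ ≤ (∫ s in (0 : ℝ)..t,
        (1 / 4) * (((a (η s))⁻¹ *ᵥ (-(deriv η s) + b (η s))) ⬝ᵥ (-(deriv η s) + b (η s))))
      - δ * ∫ s in (0 : ℝ)..t, (η s - ξ) ⬝ᵥ (η s - ξ) :=
  strict_subsolution_comparison_general N U hU a b ha hapd hb φ hφ δ ξ hsub t ht η hη hηU x hx hend
end

section
/- Let Γ̄(t), D̄(t) be P-periodic symmetric matrix-valued C¹ functions with D̄(t) ≥ cI > 0, satisfying the periodic Riccati equation Γ̄' = 4Γ̄Q̄Γ̄ - Γ̄B̄ - B̄*Γ̄ and the periodic Lyapunov equation D̄' + D̄(B̄ - 4Q̄Γ̄) + (B̄ - 4Q̄Γ̄)*D̄ = -2I, where Q̄(t) is symmetric. Then for all sufficiently small δ > 0 the matrices Γ̄⁺_δ := Γ̄ + δD̄ and Γ̄⁻_δ := Γ̄ - δD̄ satisfy, for all t, 4Γ̄⁺_δ Q̄ Γ̄⁺_δ - (Γ̄⁺_δ)'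 - Γ̄⁺_δ B̄ - B̄*Γ̄⁺_δ ≥ δI and 4Γ̄⁻_δ Q̄ Γ̄⁻_δ - (Γ̄⁻_δ)' - Γ̄⁻_δ B̄ - B̄*Γ̄⁻_δ ≤ -δI. -/
open scoped Matrix

/-!
Write `R(Γ) = 4ΓQΓ - Γ' - ΓB - BᵀΓ` for the Riccati residual. Expanding `R(Γ + sD)`, the Riccati
equation kills the constant term and the Lyapunov equation turns the linear term into `2s I`, so
`R(Γ ± δD) = ±2δ I + 4δ² DQD`. Being continuous and periodic, `DQD` is uniformly bounded, so the
quadratic term is dominated by `δ I` once `δ` is small.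
-/

open Matrix Function

section Riccati

variable {ι R : Type*} [Fintype ι] [CommRing R]

def riccatiResidual (Q B G G' : Matrix ι ι R) : Matrix ι ι R :=
  4 • (G * Q * G) - G' - G * B - Bᵀ * G

theorem riccatiResidual_add_smul [DecidableEq ι] {Q B G G' D D' : Matrix ι ι R}
    (hQ : Q.IsSymm) (hG : G.IsSymm) (hRic : G' = 4 • (G * Q * G) - G * B - Bᵀ * G)
    (hLyap : D' + D * (B - 4 • (Q * G)) + (B - 4 • (Q * G))ᵀ * D = -(2 • 1)) (s : R) :
    riccatiResidual Q B (G + s • D) (G' + s • D') = (2 * s) • 1 + (4 * s ^ 2) • (D * Q * D) := by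
  obtain rfl : D' = -(2 • 1) - D * (B - 4 • (Q * G)) - (B - 4 • (Q * G))ᵀ * D := by
    rw [← hLyap]; abel
  subst hRic
  simp only [riccatiResidual, transpose_sub, transpose_smul, transpose_mul, hQ.eq, hG.eq,
    Matrix.mul_add, Matrix.add_mul, Matrix.mul_sub, Matrix.sub_mul, Matrix.smul_mul,
    Matrix.mul_smul, smul_add, smul_sub, smul_smul, Matrix.mul_assoc]
  module

theorem riccatiResidual_sub_smul [DecidableEq ι] {Q B G G' D D' : Matrix ι ι R}
    (hQ : Q.IsSymm) (hG : G.IsSymm) (hRic : G' = 4 • (G * Q * G) - G * B - Bᵀ * G)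
    (hLyap : D' + D * (B - 4 • (Q * G)) + (B - 4 • (Q * G))ᵀ * D = -(2 • 1)) (s : R) :
    riccatiResidual Q B (G - s • D) (G' - s • D') = -(2 * s) • 1 + (4 * s ^ 2) • (D * Q * D) := by
  simpa only [neg_smul, ← sub_eq_add_neg, mul_neg, even_two.neg_pow]
    using riccatiResidual_add_smul hQ hG hRic hLyap (-s)

end Riccati

section QuadraticForm

variable {ι : Type*} [Fintype ι]

theorem abs_dotProduct_mulVec_le (A : Matrix ι ι ℝ) (x : ι → ℝ) :
    |x ⬝ᵥ A *ᵥ x| ≤ (∑ i, ∑ j, |A i j|) * (x ⬝ᵥ x) := by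
  have hsq : ∀ i, x i * x i ≤ x ⬝ᵥ x := fun i =>
    Finset.single_le_sum (fun j _ => mul_self_nonneg (x j)) (Finset.mem_univ i)
  have hmul : ∀ i j, |x i| * |x j| ≤ x ⬝ᵥ x := fun i j => by
    nlinarith [hsq i, hsq j, abs_mul_abs_self (x i), abs_mul_abs_self (x j),
      sq_nonneg (|x i| - |x j|)]
  calc |x ⬝ᵥ A *ᵥ x| = |∑ i, ∑ j, x i * (A i j * x j)| := by
        simp only [dotProduct, mulVec, Finset.mul_sum]
    _ ≤ ∑ i, ∑ j, |x i * (A i j * x j)| :=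
        (Finset.abs_sum_le_sum_abs _ _).trans
          (Finset.sum_le_sum fun i _ => Finset.abs_sum_le_sum_abs _ _)
    _ ≤ ∑ i, ∑ j, |A i j| * (x ⬝ᵥ x) := by
        gcongr with i _ j _
        rw [abs_mul, abs_mul, mul_left_comm]
        exact mul_le_mul_of_nonneg_left (hmul i j) (abs_nonneg _)
    _ = (∑ i, ∑ j, |A i j|) * (x ⬝ᵥ x) := by simp only [Finset.sum_mul]

theorem posSemidef_smul_one_add_smul [DecidableEq ι] {E : Matrix ι ι ℝ} (hE : E.IsSymm)
    {a b : ℝ} (h : |b| * ∑ i, ∑ j, |E i j| ≤ a) : (a • 1 + b • E).PosSemidef := by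
  refine .of_dotProduct_mulVec_nonneg
    (isHermitian_iff_isSymm.2 ((isSymm_one.smul a).add (hE.smul b))) fun x => ?_
  have hxx : 0 ≤ x ⬝ᵥ x := Finset.sum_nonneg fun i _ => mul_self_nonneg (x i)
  have hbound : |b * (x ⬝ᵥ E *ᵥ x)| ≤ a * (x ⬝ᵥ x) := by
    rw [abs_mul]
    calc |b| * |x ⬝ᵥ E *ᵥ x| ≤ |b| * ((∑ i, ∑ j, |E i j|) * (x ⬝ᵥ x)) :=
          mul_le_mul_of_nonneg_left (abs_dotProduct_mulVec_le E x) (abs_nonneg b)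
      _ ≤ a * (x ⬝ᵥ x) := by rw [← mul_assoc]; exact mul_le_mul_of_nonneg_right h hxx
  simp only [star_trivial, add_mulVec, smul_mulVec, one_mulVec, dotProduct_add,
    dotProduct_smul, smul_eq_mul]
  linarith [neg_abs_le (b * (x ⬝ᵥ E *ᵥ x))]

end QuadraticForm

theorem Function.Periodic.exists_pos_forall_sum_abs_le {ι : Type*} [Fintype ι]
    {E : ℝ → Matrix ι ι ℝ} {P : ℝ} (hper : Periodic E P) (hP : P ≠ 0) (hE : Continuous E) :
    ∃ K > 0, ∀ t, ∑ i, ∑ j, |E t i j| ≤ K := by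
  have hg : Continuous fun t => ∑ i, ∑ j, |E t i j| := by fun_prop
  obtain ⟨K, hK1, hK⟩ := bddAbove_iff_exists_ge 1 |>.1
    ((hper.comp fun M => ∑ i, ∑ j, |M i j|).isBounded_of_continuous hP hg).bddAbove
  exact ⟨K, one_pos.trans_le hK1, fun t => hK _ ⟨t, rfl⟩⟩

theorem periodic_riccati_perturbation_general
    (n : ℕ) (P : ℝ) (hP : 0 < P)
    (Qb Bb Γ Γ' D D' : ℝ → Matrix (Fin n) (Fin n) ℝ)
    (hQcont : ∀ i j, Continuous fun t => Qb t i j)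
    (hQper : Function.Periodic Qb P)
    (hQsym : ∀ t, (Qb t).IsSymm)
    (hΓsym : ∀ t, (Γ t).IsSymm) (hDsym : ∀ t, (D t).IsSymm)
    (hDper : Function.Periodic D P)
    (hDderiv : ∀ t i j, HasDerivAt (fun s => D s i j) (D' t i j) t)
    (hRic : ∀ t, Γ' t = 4 • (Γ t * Qb t * Γ t) - Γ t * Bb t - (Bb t)ᵀ * Γ t)
    (hLyap : ∀ t, D' t + D t * (Bb t - 4 • (Qb t * Γ t))
      + (Bb t - 4 • (Qb t * Γ t))ᵀ * D t = -(2 • (1 : Matrix (Fin n) (Fin n) ℝ))) :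
    ∃ δ₀ > 0, ∀ δ : ℝ, 0 < δ → δ ≤ δ₀ → ∀ t,
      ((4 • ((Γ t + δ • D t) * Qb t * (Γ t + δ • D t)) - (Γ' t + δ • D' t)
          - (Γ t + δ • D t) * Bb t - (Bb t)ᵀ * (Γ t + δ • D t))
        - δ • (1 : Matrix (Fin n) (Fin n) ℝ)).PosSemidef ∧
      ((-δ) • (1 : Matrix (Fin n) (Fin n) ℝ)
        - (4 • ((Γ t - δ • D t) * Qb t * (Γ t - δ • D t)) - (Γ' t - δ • D' t)
            - (Γ t - δ • D t) * Bb t - (Bb t)ᵀ * (Γ t - δ • D t))).PosSemidef := by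
  have hD : Continuous D := continuous_matrix fun i j =>
    continuous_iff_continuousAt.2 fun t => (hDderiv t i j).continuousAt
  obtain ⟨K, hK, hKbound⟩ := ((hDper.mul hQper).mul hDper).exists_pos_forall_sum_abs_le hP.ne'
    ((hD.matrix_mul (continuous_matrix hQcont)).matrix_mul hD)
  refine ⟨(4 * K)⁻¹, by positivity, fun δ hδ hδK t => ?_⟩
  have hsmall : |4 * δ ^ 2| * ∑ i, ∑ j, |(D t * Qb t * D t) i j| ≤ δ := by
    rw [abs_of_nonneg (by positivity)]
    calc 4 * δ ^ 2 * ∑ i, ∑ j, |(D t * Qb t * D t) i j| ≤ 4 * δ ^ 2 * K := by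
          gcongr; exact hKbound t
      _ = δ * (δ * (4 * K)) := by ring
      _ ≤ δ * ((4 * K)⁻¹ * (4 * K)) := by gcongr
      _ = δ := by rw [inv_mul_cancel₀ (by positivity), mul_one]
  have hE : (D t * Qb t * D t).IsSymm := by
    rw [IsSymm, transpose_mul, transpose_mul, (hQsym t).eq, (hDsym t).eq, Matrix.mul_assoc]
  constructor
  · convert posSemidef_smul_one_add_smul (a := δ) (b := 4 * δ ^ 2) hE hsmall using 1
    change riccatiResidual _ _ _ _ - _ = _
    rw [riccatiResidual_add_smul (hQsym t) (hΓsym t) (hRic t) (hLyap t)]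
    module
  · convert posSemidef_smul_one_add_smul (a := δ) (b := -(4 * δ ^ 2)) hE
      (by rwa [abs_neg]) using 1
    change _ - riccatiResidual _ _ _ _ = _
    rw [riccatiResidual_sub_smul (hQsym t) (hΓsym t) (hRic t) (hLyap t)]
    module

/-- Periodic Riccati perturbation: if the `P`-periodic symmetric matrix functions `Γ̄`, `D̄`
(`D̄ ≥ cI > 0`) satisfy the periodic Riccati equation `Γ̄' = 4Γ̄Q̄Γ̄ - Γ̄B̄ - B̄*Γ̄` and the
periodic Lyapunov equation `D̄' + D̄(B̄ - 4Q̄Γ̄) + (B̄ - 4Q̄Γ̄)*D̄ = -2I`, then for all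
sufficiently small `δ > 0` the matrices `Γ̄±δD̄` satisfy for all `t`:
`4(Γ̄+δD̄)Q̄(Γ̄+δD̄) - (Γ̄+δD̄)' - (Γ̄+δD̄)B̄ - B̄*(Γ̄+δD̄) ≥ δI` and
`4(Γ̄-δD̄)Q̄(Γ̄-δD̄) - (Γ̄-δD̄)' - (Γ̄-δD̄)B̄ - B̄*(Γ̄-δD̄) ≤ -δI`. -/
theorem periodic_riccati_perturbation
    (n : ℕ) (P : ℝ) (hP : 0 < P)
    (Qb Bb Γ Γ' D D' : ℝ → Matrix (Fin n) (Fin n) ℝ)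
    (hQcont : ∀ i j, Continuous fun t => Qb t i j)
    (hBcont : ∀ i j, Continuous fun t => Bb t i j)
    (hQper : Function.Periodic Qb P) (hBper : Function.Periodic Bb P)
    (hQsym : ∀ t, (Qb t).IsSymm)
    (hΓsym : ∀ t, (Γ t).IsSymm) (hDsym : ∀ t, (D t).IsSymm)
    (hΓper : Function.Periodic Γ P) (hDper : Function.Periodic D P)
    (hΓderiv : ∀ t i j, HasDerivAt (fun s => Γ s i j) (Γ' t i j) t)
    (hDderiv : ∀ t i j, HasDerivAt (fun s => D s i j) (D' t i j) t)
    (hΓ'cont : ∀ i j, Continuous fun t => Γ' t i j)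
    (hD'cont : ∀ i j, Continuous fun t => D' t i j)
    (c : ℝ) (hc : 0 < c)
    (hDlower : ∀ t, (D t - c • (1 : Matrix (Fin n) (Fin n) ℝ)).PosSemidef)
    (hRic : ∀ t, Γ' t = 4 • (Γ t * Qb t * Γ t) - Γ t * Bb t - (Bb t)ᵀ * Γ t)
    (hLyap : ∀ t, D' t + D t * (Bb t - 4 • (Qb t * Γ t))
      + (Bb t - 4 • (Qb t * Γ t))ᵀ * D t = -(2 • (1 : Matrix (Fin n) (Fin n) ℝ))) :
    ∃ δ₀ > 0, ∀ δ : ℝ, 0 < δ → δ ≤ δ₀ → ∀ t,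
      ((4 • ((Γ t + δ • D t) * Qb t * (Γ t + δ • D t)) - (Γ' t + δ • D' t)
          - (Γ t + δ • D t) * Bb t - (Bb t)ᵀ * (Γ t + δ • D t))
        - δ • (1 : Matrix (Fin n) (Fin n) ℝ)).PosSemidef ∧
      ((-δ) • (1 : Matrix (Fin n) (Fin n) ℝ)
        - (4 • ((Γ t - δ • D t) * Qb t * (Γ t - δ • D t)) - (Γ' t - δ • D' t)
            - (Γ t - δ • D t) * Bb t - (Bb t)ᵀ * (Γ t - δ • D t))).PosSemidef :=
  periodic_riccati_perturbation_general n P hP Qb Bb Γ Γ' D D' hQcont hQper hQsym hΓsym hDsym hDper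
    hDderiv hRic hLyap
end
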